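/- Let σ be a partition of the primes and suppose G = D ⋊ M is a finite σ-soluble group in which σ-permutability is transitive (a P σT-group), where D = G^{𝔑_σ} is the σ-nilpotent residual of G. If A is a σ-primary σ-subnormal subgroup of G with A ≤ M, then D ≤ C_G(A). -/

import Mathlib

open Subgroup
open scoped Pointwise

section Defs

variable {ι : Type*}

/-- `σ` is a partition of the set of all primes. -/
structure IsPrimePartition (σ : ι → Set ℕ) : Prop where
  prime_of_mem : ∀ i p, p ∈ σ i → p.Prime
  existsUnique_mem : ∀ p : ℕ, p.Prime → ∃! i, p ∈ σ i

/-- every prime dividing `n` lies in the block `σ i`. -/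
def IsSigmaNumber (σ : ι → Set ℕ) (i : ι) (n : ℕ) : Prop :=
  ∀ p : ℕ, p.Prime → p ∣ n → p ∈ σ i

/-- `G` is a `σ i`-group. -/
def IsSigmaIGroup (σ : ι → Set ℕ) (i : ι) (G : Type*) [Group G] : Prop :=
  IsSigmaNumber σ i (Nat.card G)

/-- `G` is σ-primary: it is a `σ i`-group for some `i`. -/
def IsSigmaPrimary (σ : ι → Set ℕ) (G : Type*) [Group G] : Prop :=
  ∃ i, IsSigmaIGroup σ i G

/-- `G` is σ-nilpotent: `G` is the internal direct product of normal
σ-primary subgroups (one `σ i`-subgroup for each block). -/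
def IsSigmaNilpotent (σ : ι → Set ℕ) (G : Type*) [Group G] : Prop :=
  ∃ H : ι → Subgroup G, (∀ i, (H i).Normal) ∧ (∀ i, IsSigmaIGroup σ i ↥(H i)) ∧
    iSupIndep H ∧ iSup H = ⊤

/-- One step in a σ-subnormal chain: `A ≤ B` and either `A` is normal in `B` or
`B/(A_B)` (quotient by the normal core of `A` in `B`) is σ-primary. -/
def SigmaSubnormalStep (σ : ι → Set ℕ) {G : Type*} [Group G] (A B : Subgroup G) : Prop :=
  A ≤ B ∧ (((A.subgroupOf B).Normal) ∨
    IsSigmaPrimary σ (↥B ⧸ (A.subgroupOf B).normalCore))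

/-- `A` is σ-subnormal in `G`. -/
def IsSigmaSubnormal (σ : ι → Set ℕ) {G : Type*} [Group G] (A : Subgroup G) : Prop :=
  ∃ n, ∃ C : Fin (n + 1) → Subgroup G, C 0 = A ∧ C (Fin.last n) = ⊤ ∧
    ∀ k : Fin n, SigmaSubnormalStep σ (C k.castSucc) (C k.succ)

/-- `A` is subnormal in `G`. -/
def IsSubnormalSub {G : Type*} [Group G] (A : Subgroup G) : Prop :=
  ∃ n, ∃ C : Fin (n + 1) → Subgroup G, C 0 = A ∧ C (Fin.last n) = ⊤ ∧
    ∀ k : Fin n, C k.castSucc ≤ C k.succ ∧ ((C k.castSucc).subgroupOf (C k.succ)).Normal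

/-- `M` is a modular subgroup of `G`: a modular element of the subgroup lattice. -/
def IsModularSubgroup {G : Type*} [Group G] (M : Subgroup G) : Prop :=
  (∀ X Z : Subgroup G, X ≤ Z → X ⊔ (M ⊓ Z) = (X ⊔ M) ⊓ Z) ∧
  (∀ Y Z : Subgroup G, M ≤ Z → M ⊔ (Y ⊓ Z) = (M ⊔ Y) ⊓ Z)

/-- `A` is submodular in `G`: there is a chain from `A` to `G` with each
term modular in the next. -/
def IsSubmodular {G : Type*} [Group G] (A : Subgroup G) : Prop :=
  ∃ n, ∃ C : Fin (n + 1) → Subgroup G, C 0 = A ∧ C (Fin.last n) = ⊤ ∧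
    ∀ k : Fin n, C k.castSucc ≤ C k.succ ∧
      IsModularSubgroup ((C k.castSucc).subgroupOf (C k.succ))

/-- `H` is a Hall `σ i`-subgroup of `G`. -/
def IsHallSigmaI (σ : ι → Set ℕ) (i : ι) {G : Type*} [Group G] (H : Subgroup G) : Prop :=
  IsSigmaNumber σ i (Nat.card H) ∧ ∀ p : ℕ, p.Prime → p ∣ H.index → p ∉ σ i

/-- `G` is σ-full: it has a Hall `σ i`-subgroup for every `σ i ∈ σ(G)`. -/
def IsSigmaFull (σ : ι → Set ℕ) (G : Type*) [Group G] : Prop :=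
  ∀ i, (∃ p : ℕ, p.Prime ∧ p ∈ σ i ∧ p ∣ Nat.card G) →
    ∃ H : Subgroup G, IsHallSigmaI σ i H

/-- Two subgroups permute. -/
def Permutes {G : Type*} [Group G] (A B : Subgroup G) : Prop :=
  (A : Set G) * (B : Set G) = (B : Set G) * (A : Set G)

/-- `A` is σ-permutable in `G`: it permutes with every Hall `σ i`-subgroup of `G`
(hence with all their conjugates). -/
def IsSigmaPermutable (σ : ι → Set ℕ) {G : Type*} [Group G] (A : Subgroup G) : Prop :=
  ∀ i, ∀ H : Subgroup G, IsHallSigmaI σ i H → Permutes A H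

/-- `A` is quasinormal (permutable) in `G`. -/
def IsQuasinormal {G : Type*} [Group G] (A : Subgroup G) : Prop :=
  ∀ B : Subgroup G, Permutes A B

/-- `A` is σ-quasinormal in `G`: modular and σ-subnormal. -/
def IsSigmaQuasinormal (σ : ι → Set ℕ) {G : Type*} [Group G] (A : Subgroup G) : Prop :=
  IsModularSubgroup A ∧ IsSigmaSubnormal σ A

/-- σ-permutability is a transitive relation on `G`. -/
def IsPSigmaTGroup (σ : ι → Set ℕ) (G : Type*) [Group G] : Prop :=
  ∀ K H : Subgroup G, H ≤ K → IsSigmaPermutable σ (H.subgroupOf K) →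
    IsSigmaPermutable σ K → IsSigmaPermutable σ H

/-- `H/K` is a chief factor of `G`. -/
def IsChiefFactor (G : Type*) [Group G] (K H : Subgroup G) : Prop :=
  K.Normal ∧ H.Normal ∧ K < H ∧
    ∀ N : Subgroup G, N.Normal → K ≤ N → N ≤ H → N = K ∨ N = H

/-- `G` is σ-soluble: every chief factor of `G` is σ-primary. -/
def IsSigmaSoluble (σ : ι → Set ℕ) (G : Type*) [Group G] : Prop :=
  ∀ K H : Subgroup G, ∀ hc : IsChiefFactor G K H,
    letI := hc.1; IsSigmaPrimary σ (↥H ⧸ K.subgroupOf H)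

/-- The σ-nilpotent residual `G^{𝔑_σ}` of `G`. -/
def sigmaNilpotentResidual (σ : ι → Set ℕ) (G : Type*) [Group G] : Subgroup G :=
  sInf {N : Subgroup G | ∃ h : N.Normal, letI := h; IsSigmaNilpotent σ (G ⧸ N)}

/-- The σ-soluble residual `G^{𝔖_σ}` of `G`. -/
def sigmaSolubleResidual (σ : ι → Set ℕ) (G : Type*) [Group G] : Subgroup G :=
  sInf {N : Subgroup G | ∃ h : N.Normal, letI := h; IsSigmaSoluble σ (G ⧸ N)}

/-- `G` is a σ-SC-group: every chief factor of `G` below `G^{𝔑_σ}` is simple. -/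
def IsSigmaSCGroup (σ : ι → Set ℕ) (G : Type*) [Group G] : Prop :=
  ∀ K H : Subgroup G, ∀ hc : IsChiefFactor G K H, H ≤ sigmaNilpotentResidual σ G →
    letI := hc.1; IsSimpleGroup (↥H ⧸ K.subgroupOf H)

/-- `G` is σ-supersoluble: every chief factor of `G` below `G^{𝔑_σ}` is cyclic. -/
def IsSigmaSupersoluble (σ : ι → Set ℕ) (G : Type*) [Group G] : Prop :=
  ∀ K H : Subgroup G, ∀ hc : IsChiefFactor G K H, H ≤ sigmaNilpotentResidual σ G →
    letI := hc.1; IsCyclic (↥H ⧸ K.subgroupOf H)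

/-- The σ-supersoluble residual `G^{𝔘_σ}` of `G`. -/
def sigmaSupersolubleResidual (σ : ι → Set ℕ) (G : Type*) [Group G] : Subgroup G :=
  sInf {N : Subgroup G | ∃ h : N.Normal, letI := h; IsSigmaSupersoluble σ (G ⧸ N)}

/-- The soluble radical `G_𝔖`: the largest soluble normal subgroup of `G`. -/
def solubleRadical (G : Type*) [Group G] : Subgroup G :=
  sSup {N : Subgroup G | N.Normal ∧ IsSolvable ↥N}

/-- `O_{σ i}(G)`: the largest normal `σ i`-subgroup of `G`. -/
def sigmaCore (σ : ι → Set ℕ) (i : ι) (G : Type*) [Group G] : Subgroup G :=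
  sSup {N : Subgroup G | N.Normal ∧ IsSigmaIGroup σ i ↥N}

/-- `O^{σ i}(G)`: the smallest normal subgroup of `G` with `σ i`-quotient. -/
def sigmaIResidual (σ : ι → Set ℕ) (i : ι) (G : Type*) [Group G] : Subgroup G :=
  sInf {N : Subgroup G | ∃ h : N.Normal, letI := h; IsSigmaIGroup σ i (G ⧸ N)}

end Defs

/-!
Let `A` be a `σ i`-group. In a PσT-group the σ-subnormal subgroup `A` is σ-permutable, so it
permutes with every Hall `σ j`-subgroup `H`, `j ≠ i`; these exist because `G` is σ-soluble
(induction on `|G|` through a σ-primary minimal normal subgroup and Schur–Zassenhaus). Inside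
`AH` the subgroup `A` is a σ-subnormal `σ i`-subgroup of `σ i'`-index, and running along its
σ-subnormal chain shows it is normal there, so `H` normalizes `A`. Hence the normal core of
`N_G(A)` has `σ i`-index, the quotient by it is σ-nilpotent, and `D ≤ N_G(A)`. Finally
`[D, A] ≤ D ∩ A ≤ D ∩ M = 1`.
-/

section SigmaGroups

variable {ι : Type*} {σ : ι → Set ℕ}

/-- `n` is a `σ i'`-number. -/
def IsSigmaComplNumber (σ : ι → Set ℕ) (i : ι) (n : ℕ) : Prop :=
  ∀ p : ℕ, p.Prime → p ∣ n → p ∉ σ i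

section Numbers

variable {i j : ι} {m n : ℕ}

lemma IsPrimePartition.eq_of_mem (hσ : IsPrimePartition σ) {p : ℕ} (hp : p.Prime)
    (hi : p ∈ σ i) (hj : p ∈ σ j) : i = j := by
  obtain ⟨k, -, hk⟩ := hσ.existsUnique_mem p hp
  rw [hk i hi, hk j hj]

lemma IsSigmaNumber.of_dvd (h : IsSigmaNumber σ i n) (hmn : m ∣ n) : IsSigmaNumber σ i m :=
  fun p hp hpm => h p hp (hpm.trans hmn)

lemma IsSigmaComplNumber.of_dvd (h : IsSigmaComplNumber σ i n) (hmn : m ∣ n) :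
    IsSigmaComplNumber σ i m :=
  fun p hp hpm => h p hp (hpm.trans hmn)

lemma IsSigmaNumber.mul (hm : IsSigmaNumber σ i m) (hn : IsSigmaNumber σ i n) :
    IsSigmaNumber σ i (m * n) := fun p hp hpd =>
  (hp.dvd_mul.mp hpd).elim (hm p hp) (hn p hp)

lemma IsSigmaComplNumber.mul (hm : IsSigmaComplNumber σ i m) (hn : IsSigmaComplNumber σ i n) :
    IsSigmaComplNumber σ i (m * n) := fun p hp hpd =>
  (hp.dvd_mul.mp hpd).elim (hm p hp) (hn p hp)

lemma IsSigmaNumber.isSigmaComplNumber (hσ : IsPrimePartition σ) (h : IsSigmaNumber σ j n)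
    (hji : j ≠ i) : IsSigmaComplNumber σ i n :=
  fun p hp hpn hpi => hji (hσ.eq_of_mem hp (h p hp hpn) hpi)

lemma IsSigmaNumber.coprime (hm : IsSigmaNumber σ i m) (hn : IsSigmaComplNumber σ i n) :
    m.Coprime n :=
  Nat.coprime_of_dvd fun p hp hpm hpn => hn p hp hpn (hm p hp hpm)

end Numbers

section Permutes

variable {G : Type*} [Group G] {A H : Subgroup G}

lemma permutes_of_le_normalizer (h : H ≤ normalizer A) : Permutes A H :=
  (set_mul_normalizer_comm _ _ h).symm

lemma permutes_of_normal_le_of_sup_eq_top {R : Subgroup G} [R.Normal] (hRA : R ≤ A)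
    (hRH : R ⊔ H = ⊤) : Permutes A H := by
  have hRA' : (R : Set G) ⊆ A := hRA
  have h₁ : (A : Set G) * (H : Set G) = Set.univ := Set.eq_univ_of_univ_subset <| by
    rw [← coe_top, ← hRH, normal_mul]
    exact Set.mul_subset_mul_right hRA'
  have h₂ : (H : Set G) * (A : Set G) = Set.univ := Set.eq_univ_of_univ_subset <| by
    rw [← coe_top, ← hRH, sup_comm, mul_normal]
    exact Set.mul_subset_mul_left hRA'
  rw [Permutes, h₁, h₂]

lemma Permutes.coe_sup (h : Permutes A H) :
    ((A ⊔ H : Subgroup G) : Set G) = (A : Set G) * (H : Set G) := by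
  let S : Subgroup G :=
    { carrier := (A : Set G) * (H : Set G)
      one_mem' := ⟨1, A.one_mem, 1, H.one_mem, one_mul 1⟩
      mul_mem' := fun hx hy => by
        have hS : (A : Set G) * H * (A * H) = (A : Set G) * (H : Set G) := by
          rw [mul_assoc, ← mul_assoc (H : Set G), ← h, mul_assoc, coe_mul_coe,
            ← mul_assoc, coe_mul_coe]
        exact hS ▸ Set.mul_mem_mul hx hy
      inv_mem' := fun hx => by
        have hS : ((A : Set G) * H)⁻¹ = (A : Set G) * (H : Set G) := by
          rw [mul_inv_rev, inv_coe_set, inv_coe_set, h]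
        exact hS ▸ Set.inv_mem_inv.mpr hx }
  have hAS : A ⊔ H = S := le_antisymm
    (sup_le (fun a ha => ⟨a, ha, 1, H.one_mem, mul_one a⟩)
      (fun x hx => ⟨1, A.one_mem, x, hx, one_mul x⟩))
    (fun _ ⟨a, ha, b, hb, hab⟩ => hab ▸ mul_mem (mem_sup_left ha) (mem_sup_right hb))
  rw [hAS]
  rfl

lemma Permutes.card_sup (h : Permutes A H) (hd : Disjoint A H) :
    Nat.card (A ⊔ H : Subgroup G) = Nat.card A * Nat.card H := by
  have hinj : Set.InjOn (QuotientGroup.mk : G → G ⧸ A) H := fun x hx y hy hxy => by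
    have hmem : x⁻¹ * y ∈ A ⊓ H := ⟨QuotientGroup.eq.mp hxy, H.mul_mem (H.inv_mem hx) hy⟩
    rw [hd.eq_bot, mem_bot, inv_mul_eq_one] at hmem
    exact hmem
  change Nat.card ((A ⊔ H : Subgroup G) : Set G) = _
  rw [h.coe_sup, h, card_mul_eq_card_subgroup_mul_card_quotient,
    Nat.card_image_of_injOn hinj]
  rfl

lemma Permutes.relIndex_sup [Finite G] (h : Permutes A H) (hd : Disjoint A H) :
    A.relIndex (A ⊔ H) = Nat.card H := by
  have hcard := relIndex_mul_relIndex ⊥ A (A ⊔ H) bot_le le_sup_left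
  rw [relIndex_bot_left, relIndex_bot_left, h.card_sup hd] at hcard
  exact Nat.eq_of_mul_eq_mul_left Nat.card_pos hcard

end Permutes

section Permutability

variable {G : Type*} [Group G]

lemma SigmaSubnormalStep.isSigmaPermutable (hσ : IsPrimePartition σ) {A B : Subgroup G}
    (h : SigmaSubnormalStep σ A B) : IsSigmaPermutable σ (A.subgroupOf B) := by
  obtain ⟨-, hN | ⟨m, hm⟩⟩ := h
  · exact fun _ _ _ => permutes_of_le_normalizer le_normalizer_of_normal
  intro j H hH
  set R := (A.subgroupOf B).normalCore
  have hRA : R ≤ A.subgroupOf B := normalCore_le _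
  have hR : IsSigmaNumber σ m R.index := hm
  by_cases hjm : j = m
  · subst hjm
    refine permutes_of_normal_le_of_sup_eq_top hRA (index_eq_one.mp ?_)
    exact Nat.eq_one_of_dvd_coprimes (hR.coprime hH.2) (index_dvd_of_le le_sup_left)
      (index_dvd_of_le le_sup_right)
  · have hHR : H ≤ R := relIndex_eq_one.mp <|
      Nat.eq_one_of_dvd_coprimes (hH.1.coprime (hR.isSigmaComplNumber hσ (Ne.symm hjm)))
        (relIndex_dvd_card _ _) (relIndex_dvd_index_of_normal _ _)
    exact permutes_of_le_normalizer (hHR.trans hRA |>.trans le_normalizer)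

lemma IsPSigmaTGroup.isSigmaPermutable_of_isSigmaSubnormal (hPT : IsPSigmaTGroup σ G)
    (hσ : IsPrimePartition σ) {A : Subgroup G} (hA : IsSigmaSubnormal σ A) :
    IsSigmaPermutable σ A := by
  obtain ⟨n, C, rfl, hlast, hstep⟩ := hA
  suffices ∀ k, IsSigmaPermutable σ (C k) from this 0
  intro k
  induction k using Fin.reverseInduction with
  | last => exact hlast ▸ fun _ _ _ => permutes_of_le_normalizer le_normalizer_of_normal
  | cast k ih => exact hPT _ _ (hstep k).1 ((hstep k).isSigmaPermutable hσ) ih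

end Permutability

section Chains

variable {G : Type*} [Group G] {i : ι}

lemma card_subgroupOf_of_le {A C : Subgroup G} (h : A ≤ C) :
    Nat.card (A.subgroupOf C) = Nat.card A :=
  Nat.card_congr (subgroupOfEquivOfLe h).toEquiv

lemma SigmaSubnormalStep.inf {A B : Subgroup G} (h : SigmaSubnormalStep σ A B)
    (X : Subgroup G) : SigmaSubnormalStep σ (A ⊓ X) (B ⊓ X) := by
  obtain ⟨hAB, hN | ⟨m, hm⟩⟩ := h
  · refine ⟨inf_le_inf_right X hAB, Or.inl ?_⟩
    have hBA := (normal_subgroupOf_iff_le_normalizer hAB).mp hN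
    rw [normal_subgroupOf_iff_le_normalizer (inf_le_inf_right X hAB), le_normalizer_iff]
    rintro x ⟨hxB, hxX⟩ a ⟨haA, haX⟩
    exact ⟨le_normalizer_iff.mp hBA x hxB a haA, X.mul_mem (X.mul_mem hxX haX) (X.inv_mem hxX)⟩
  · refine ⟨inf_le_inf_right X hAB, Or.inr ⟨m, ?_⟩⟩
    set R := (A.subgroupOf B).normalCore
    let f := inclusion (inf_le_left : B ⊓ X ≤ B)
    have hRX : R.comap f ≤ ((A ⊓ X).subgroupOf (B ⊓ X)).normalCore :=
      normal_le_normalCore.mpr fun x hx => ⟨normalCore_le (A.subgroupOf B) hx, x.2.2⟩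
    have hdvd : ((A ⊓ X).subgroupOf (B ⊓ X)).normalCore.index ∣ R.index :=
      (index_dvd_of_le hRX).trans (index_comap R f ▸ relIndex_dvd_index_of_normal _ _)
    exact IsSigmaNumber.of_dvd hm hdvd

lemma le_of_le_normalizer_of_coprime {A B K : Subgroup G} (hAB : A ≤ B) (hB : B ≤ normalizer A)
    (hKB : K ≤ B) (hK : (Nat.card K).Coprime (A.relIndex B)) : K ≤ A := by
  have hdvd : A.relIndex K ∣ A.relIndex B := by
    have := (normal_subgroupOf_iff_le_normalizer hAB).mpr hB
    rw [← relIndex_subgroupOf hKB]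
    exact relIndex_dvd_index_of_normal _ _
  exact relIndex_eq_one.mp (Nat.eq_one_of_dvd_coprimes hK (relIndex_dvd_card _ _) hdvd)

lemma SigmaSubnormalStep.map_conj_le (hσ : IsPrimePartition σ) {A B C : Subgroup G}
    (h : SigmaSubnormalStep σ B C) (hAB : A ≤ B) (hA : IsSigmaNumber σ i (Nat.card A))
    (hAC : IsSigmaComplNumber σ i (A.relIndex C)) {x : G} (hx : x ∈ C) :
    A.map (MulAut.conj x).toMonoidHom ≤ B := by
  obtain ⟨hBC, hN | ⟨m, hm⟩⟩ := h
  · have hxB : x ∈ normalizer B := (normal_subgroupOf_iff_le_normalizer hBC).mp hN hx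
    rintro _ ⟨a, ha, rfl⟩
    exact (mem_normalizer_iff.mp hxB a).mp (hAB ha)
  set R := (B.subgroupOf C).normalCore
  have hR : IsSigmaNumber σ m R.index := hm
  by_cases hmi : m = i
  · subst hmi
    have hCB : C ≤ B := relIndex_eq_one.mp <|
      Nat.eq_one_of_dvd_coprimes (hR.coprime (hAC.of_dvd (relIndex_dvd_of_le_left C hAB)))
        (index_dvd_of_le (normalCore_le _)) dvd_rfl
    rintro _ ⟨a, ha, rfl⟩
    exact B.mul_mem (B.mul_mem (hCB hx) (hAB ha)) (B.inv_mem (hCB hx))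
  · have hAC' : A ≤ C := hAB.trans hBC
    have hAR : A.subgroupOf C ≤ R := relIndex_eq_one.mp <|
      Nat.eq_one_of_dvd_coprimes (hA.coprime (hR.isSigmaComplNumber hσ hmi))
        (card_subgroupOf_of_le hAC' ▸ relIndex_dvd_card _ _) (relIndex_dvd_index_of_normal _ _)
    rintro _ ⟨a, ha, rfl⟩
    exact normalCore_le (B.subgroupOf C) <|
      (normalCore_normal _).conj_mem ⟨a, hAC' ha⟩ (hAR ha) ⟨x, hx⟩

lemma le_normalizer_of_sigmaSubnormalStep_chain (hσ : IsPrimePartition σ) {n : ℕ}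
    {C : Fin (n + 1) → Subgroup G}
    (hC : ∀ k : Fin n, SigmaSubnormalStep σ (C k.castSucc) (C k.succ))
    (hA : IsSigmaNumber σ i (Nat.card (C 0)))
    (hX : IsSigmaComplNumber σ i ((C 0).relIndex (C (Fin.last n)))) :
    C (Fin.last n) ≤ normalizer (C 0) := by
  have hmono : Monotone C := Fin.monotone_iff_le_succ.mpr fun k => (hC k).1
  have hrel (k) : IsSigmaComplNumber σ i ((C 0).relIndex (C k)) :=
    hX.of_dvd (Dvd.intro _ (relIndex_mul_relIndex _ _ _ (hmono (Fin.zero_le k))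
      (hmono (Fin.le_last k))))
  suffices ∀ k, C k ≤ normalizer (C 0) from this _
  intro k
  induction k using Fin.induction with
  | zero => exact le_normalizer
  | succ k ih =>
    refine le_normalizer_iff.mpr fun x hx a ha => ?_
    have hconj := le_of_le_normalizer_of_coprime (hmono (Fin.zero_le _)) ih
      ((hC k).map_conj_le hσ (hmono (Fin.zero_le _)) hA (hrel _) hx)
      (by rw [card_map_of_injective (MulAut.conj x).injective]; exact hA.coprime (hrel _))
    exact hconj ⟨a, ha, rfl⟩

lemma IsSigmaSubnormal.le_normalizer (hσ : IsPrimePartition σ) {A X : Subgroup G}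
    (hA : IsSigmaSubnormal σ A) (hAi : IsSigmaNumber σ i (Nat.card A)) (hAX : A ≤ X)
    (hX : IsSigmaComplNumber σ i (A.relIndex X)) : X ≤ normalizer A := by
  obtain ⟨n, C, rfl, hlast, hC⟩ := hA
  have h0X : C 0 ⊓ X = C 0 := inf_eq_left.mpr hAX
  have hlastX : C (Fin.last n) ⊓ X = X := by rw [hlast, top_inf_eq]
  have := le_normalizer_of_sigmaSubnormalStep_chain (i := i) (C := fun k => C k ⊓ X) hσ
    (fun k => (hC k).inf X)
  simp only [h0X, hlastX] at this
  exact this hAi hX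

variable [Finite G] in
lemma IsSigmaSubnormal.le_normalizer_of_permutes (hσ : IsPrimePartition σ) {A H : Subgroup G}
    (hA : IsSigmaSubnormal σ A) (hAi : IsSigmaNumber σ i (Nat.card A))
    (hH : IsSigmaComplNumber σ i (Nat.card H)) (hAH : Permutes A H) : H ≤ normalizer A := by
  have hd : Disjoint A H := disjoint_of_coprime_natCard (hAi.coprime hH)
  exact le_sup_right.trans <|
    hA.le_normalizer hσ hAi le_sup_left ((hAH.relIndex_sup hd).symm ▸ hH)

end Chains

section Hall

variable {G : Type*} [Group G] {j : ι}

lemma IsHallSigmaI.map_equiv {G' : Type*} [Group G'] {H : Subgroup G}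
    (hH : IsHallSigmaI σ j H) (e : G ≃* G') : IsHallSigmaI σ j (H.map e.toMonoidHom) :=
  ⟨(card_map_of_injective (f := e.toMonoidHom) e.injective).symm ▸ hH.1,
    (index_map_equiv H e).symm ▸ hH.2⟩

lemma IsChiefFactor.comap {G' : Type*} [Group G'] {f : G →* G'} (hf : Function.Surjective f)
    {K H : Subgroup G'} (h : IsChiefFactor G' K H) :
    IsChiefFactor G (K.comap f) (H.comap f) := by
  obtain ⟨hK, hH, hKH, hmin⟩ := h
  refine ⟨hK.comap f, hH.comap f, (comap_lt_comap_of_surjective hf).mpr hKH,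
    fun N hN hKN hNH => ?_⟩
  have hkerN : f.ker ≤ N := (ker_le_comap f K).trans hKN
  have hmap := hmin (N.map f) (hN.map f hf)
    (map_comap_eq_self_of_surjective hf K ▸ map_mono hKN)
    (map_comap_eq_self_of_surjective hf H ▸ map_mono hNH)
  rw [← comap_map_eq_self hkerN]
  exact hmap.imp (congrArg (Subgroup.comap f)) (congrArg (Subgroup.comap f))

lemma IsSigmaSoluble.of_surjective {G' : Type*} [Group G'] (hG : IsSigmaSoluble σ G)
    {f : G →* G'} (hf : Function.Surjective f) : IsSigmaSoluble σ G' := by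
  intro K H hc
  obtain ⟨m, hm⟩ := hG _ _ (hc.comap hf)
  have hm' : IsSigmaNumber σ m ((K.comap f).relIndex (H.comap f)) := hm
  rw [relIndex_comap, map_comap_eq_self_of_surjective hf] at hm'
  exact ⟨m, hm'⟩

lemma IsSigmaSoluble.exists_normal_isSigmaNumber [Finite G] [Nontrivial G]
    (hG : IsSigmaSoluble σ G) :
    ∃ N : Subgroup G, N.Normal ∧ N ≠ ⊥ ∧ ∃ m, IsSigmaNumber σ m (Nat.card N) := by
  obtain ⟨N, -, hN⟩ := exists_minimal_le_of_wellFoundedLT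
    (fun N : Subgroup G => N.Normal ∧ N ≠ ⊥) ⊤ ⟨inferInstance, top_ne_bot⟩
  have hchief : IsChiefFactor G ⊥ N :=
    ⟨inferInstance, hN.prop.1, bot_lt_iff_ne_bot.mpr hN.prop.2, fun N' hN' _ hN'N =>
      or_iff_not_imp_left.mpr fun hne => hN.eq_of_le ⟨hN', hne⟩ hN'N⟩
  obtain ⟨m, hm⟩ := hG ⊥ N hchief
  have hm' : IsSigmaNumber σ m ((⊥ : Subgroup G).relIndex N) := hm
  exact ⟨N, hN.prop.1, hN.prop.2, m, relIndex_bot_left N ▸ hm'⟩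

lemma exists_isHallSigmaI_of_quotient [Finite G] (hσ : IsPrimePartition σ) {N : Subgroup G}
    [N.Normal] {m : ι} (hN : IsSigmaNumber σ m (Nat.card N)) {Hb : Subgroup (G ⧸ N)}
    (hHb : IsHallSigmaI σ j Hb) : ∃ H : Subgroup G, IsHallSigmaI σ j H := by
  have hsurj := QuotientGroup.mk'_surjective N
  set K := Hb.comap (QuotientGroup.mk' N)
  have hNK : N ≤ K := (QuotientGroup.ker_mk' N).symm.trans_le (ker_le_comap _ Hb)
  have hKidx : K.index = Hb.index := index_comap_of_surjective Hb hsurj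
  have hNrel : N.relIndex K = Nat.card Hb := by
    have := relIndex_ker K (QuotientGroup.mk' N)
    rwa [QuotientGroup.ker_mk', map_comap_eq_self_of_surjective hsurj] at this
  have hKcard : Nat.card K = Nat.card N * Nat.card Hb := by
    have := relIndex_mul_relIndex ⊥ N K bot_le hNK
    rwa [relIndex_bot_left, relIndex_bot_left, hNrel, eq_comm] at this
  by_cases hmj : m = j
  · subst hmj
    exact ⟨K, hKcard ▸ hN.mul hHb.1, hKidx ▸ hHb.2⟩
  have hN' := hN.isSigmaComplNumber hσ hmj
  have hcop : (Nat.card (N.subgroupOf K)).Coprime (N.subgroupOf K).index := by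
    rw [card_subgroupOf_of_le hNK]
    exact (hHb.1.coprime hN').symm.coprime_dvd_right (hNrel ▸ dvd_rfl)
  obtain ⟨H, hH⟩ := exists_right_complement'_of_coprime hcop
  refine ⟨H.map K.subtype, ?_, ?_⟩
  · rw [card_map_of_injective K.subtype_injective, ← hH.symm.index_eq_card]
    change IsSigmaNumber σ j (N.relIndex K)
    exact hNrel ▸ hHb.1
  · rw [index_map_subtype, hH.index_eq_card, card_subgroupOf_of_le hNK, hKidx]
    exact hN'.mul hHb.2

theorem IsSigmaSoluble.exists_isHallSigmaI (hσ : IsPrimePartition σ) [Finite G]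
    (hG : IsSigmaSoluble σ G) (j : ι) : ∃ H : Subgroup G, IsHallSigmaI σ j H := by
  induction hn : Nat.card G using Nat.strong_induction_on generalizing G with
  | _ n ih =>
  subst hn
  rcases subsingleton_or_nontrivial G with hG1 | hG1
  · refine ⟨⊤, fun p hp hpd => ?_, fun p hp hpd => ?_⟩
    · rw [card_top, Nat.card_of_subsingleton (1 : G)] at hpd
      exact (hp.not_dvd_one hpd).elim
    · rw [index_top] at hpd
      exact (hp.not_dvd_one hpd).elim
  obtain ⟨N, hN, hNbot, m, hm⟩ := hG.exists_normal_isSigmaNumber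
  have hlt : Nat.card (G ⧸ N) < Nat.card G := by
    rw [card_eq_card_quotient_mul_card_subgroup N]
    exact lt_mul_of_one_lt_right Nat.card_pos ((one_lt_card_iff_ne_bot N).mpr hNbot)
  obtain ⟨Hb, hHb⟩ := ih _ hlt (hG.of_surjective (QuotientGroup.mk'_surjective N)) rfl
  exact exists_isHallSigmaI_of_quotient hσ hm hHb

end Hall

section Residual

variable {G : Type*} [Group G] {i : ι}

lemma isSigmaNumber_index_normalCore (hσ : IsPrimePartition σ)
    (hexists : ∀ j, ∃ H : Subgroup G, IsHallSigmaI σ j H) {K : Subgroup G}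
    (hK : ∀ j ≠ i, ∀ H : Subgroup G, IsHallSigmaI σ j H → H ≤ K) :
    IsSigmaNumber σ i K.normalCore.index := by
  intro p hp hpd
  obtain ⟨j, hpj, -⟩ := hσ.existsUnique_mem p hp
  by_cases hji : j = i
  · exact hji ▸ hpj
  obtain ⟨H, hH⟩ := hexists j
  have hHK : H ≤ K.normalCore := fun h hh b =>
    hK j hji _ (hH.map_equiv (MulAut.conj b)) ⟨h, hh, rfl⟩
  exact absurd hpj (hH.2 p hp (hpd.trans (index_dvd_of_le hHK)))

lemma isSigmaNilpotent_of_isSigmaIGroup (h : IsSigmaIGroup σ i G) : IsSigmaNilpotent σ G := by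
  classical
  refine ⟨fun j => if j = i then ⊤ else ⊥, fun j => ?_, fun j => ?_, ?_, ?_⟩
  · dsimp only
    split_ifs <;> infer_instance
  · dsimp only
    by_cases hj : j = i
    · rwa [IsSigmaIGroup, if_pos hj, card_top, hj]
    · rw [IsSigmaIGroup, if_neg hj, card_bot]
      exact fun p hp hpd => (hp.not_dvd_one hpd).elim
  · refine iSupIndep_def.mpr fun j => ?_
    split_ifs with hj
    · subst hj
      simp +contextual
    · exact disjoint_bot_left
  · exact eq_top_iff.mpr (le_iSup_of_le i (by simp))

lemma sigmaNilpotentResidual_le {N : Subgroup G} [N.Normal]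
    (h : IsSigmaNilpotent σ (G ⧸ N)) : sigmaNilpotentResidual σ G ≤ N :=
  sInf_le ⟨inferInstance, h⟩

lemma le_centralizer_of_le_normalizer {D M A : Subgroup G} [D.Normal] (hDM : Disjoint D M)
    (hAM : A ≤ M) (hDA : D ≤ normalizer A) : D ≤ centralizer A := by
  rw [← commutator_eq_bot_iff_le_centralizer, eq_bot_iff]
  calc ⁅D, A⁆ ≤ D ⊓ A :=
        le_inf (commutator_le_left D A) (le_normalizer_iff_commutator_le_right.mp hDA)
    _ ≤ D ⊓ M := inf_le_inf_left D hAM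
    _ = ⊥ := hDM.eq_bot

end Residual

end SigmaGroups

/-- If `G = D ⋊ M` is a σ-soluble PσT-group with `D = G^{𝔑_σ}` and `A` is a
σ-primary σ-subnormal subgroup of `G` with `A ≤ M`, then `D ≤ C_G(A)`. -/
theorem statement_12 {ι : Type*} (σ : ι → Set ℕ) (hσ : IsPrimePartition σ)
    {G : Type*} [Group G] [Finite G]
    (hsol : IsSigmaSoluble σ G) (hPT : IsPSigmaTGroup σ G)
    (D M : Subgroup G) (hD : D = sigmaNilpotentResidual σ G)
    (hDn : D.Normal) (hcompl : D.IsComplement' M)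
    (A : Subgroup G) (hA1 : IsSigmaPrimary σ ↥A) (hA2 : IsSigmaSubnormal σ A)
    (hAM : A ≤ M) :
    D ≤ Subgroup.centralizer (A : Set G) := by
  obtain ⟨i, hAi⟩ := hA1
  have hperm := hPT.isSigmaPermutable_of_isSigmaSubnormal hσ hA2
  have hnorm : ∀ j ≠ i, ∀ H : Subgroup G, IsHallSigmaI σ j H → H ≤ normalizer A :=
    fun j hji H hH => hA2.le_normalizer_of_permutes hσ hAi (hH.1.isSigmaComplNumber hσ hji)
      (hperm j H hH)
  have hnil : IsSigmaNilpotent σ (G ⧸ (normalizer A).normalCore) :=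
    isSigmaNilpotent_of_isSigmaIGroup
      (isSigmaNumber_index_normalCore hσ (hsol.exists_isHallSigmaI hσ) hnorm)
  have hDA : D ≤ normalizer A :=
    hD ▸ (sigmaNilpotentResidual_le hnil).trans (normalCore_le _)
  exact le_centralizer_of_le_normalizer hcompl.disjoint hAM hDA
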